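/- arXiv:1501.06397 — 6 statements merged into one kernel-verified Lean document; each statement's English description precedes it below -/
import Mathlib

section
/- The Bayer–Macrì vector is Mukai-perpendicular to the Mukai vector: for every Chern character ch ∈ ℝ × V × ℝ and all ω, β ∈ V, the vector w_{ω,β}(ch) := (Im Z_{ω,β}(ch))·℧_Z^re − (Re Z_{ω,β}(ch))·℧_Z^im ∈ ℝ × V × ℝ satisfies ⟨w_{ω,β}(ch), v(ch)⟩ = 0. -/
noncomputable section

variable {V : Type*} [AddCommGroup V] [Module ℝ V]

/-- The Mukai pairing on `ℝ × V × ℝ`. -/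
def mukaiPair (B : V →ₗ[ℝ] V →ₗ[ℝ] ℝ) (K : V) (w v : ℝ × V × ℝ) : ℝ :=
  B w.2.1 v.2.1 - w.1 * (v.2.2 - (1/2) * B v.2.1 K)
    - v.1 * (w.2.2 + (1/2) * B w.2.1 K) - (1/8) * w.1 * v.1 * B K K

/-- The Mukai vector of a Chern character. -/
def mukaiVec (B : V →ₗ[ℝ] V →ₗ[ℝ] ℝ) (K : V) (χ : ℝ) (ch : ℝ × V × ℝ) : ℝ × V × ℝ :=
  (ch.1, ch.2.1 - ((1/4 : ℝ) * ch.1) • K,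
    ch.2.2 - (1/4) * B ch.2.1 K + (1/2) * ch.1 * (χ - (1/16) * B K K))

/-- Real part of the central charge `Z_{ω,β}(ch)`. -/
def ZRe (B : V →ₗ[ℝ] V →ₗ[ℝ] ℝ) (ω β : V) (ch : ℝ × V × ℝ) : ℝ :=
  -ch.2.2 + B ch.2.1 β - (ch.1 / 2) * (B β β - B ω ω)

/-- Imaginary part of the central charge `Z_{ω,β}(ch)`. -/
def ZIm (B : V →ₗ[ℝ] V →ₗ[ℝ] ℝ) (ω β : V) (ch : ℝ × V × ℝ) : ℝ :=
  B ch.2.1 ω - ch.1 * B β ω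

/-- Real part of the vector `℧_{Z_{ω,β}}`. -/
def mhoRe (B : V →ₗ[ℝ] V →ₗ[ℝ] ℝ) (K : V) (χ : ℝ) (ω β : V) : ℝ × V × ℝ :=
  (1, β - (3/4 : ℝ) • K,
    -(1/2) * B ω ω + (1/2) * B (β - (3/4 : ℝ) • K) (β - (3/4 : ℝ) • K)
      - (1/2) * (χ - (1/8) * B K K))

/-- Imaginary part of the vector `℧_{Z_{ω,β}}`. -/
def mhoIm (B : V →ₗ[ℝ] V →ₗ[ℝ] ℝ) (K : V) (ω β : V) : ℝ × V × ℝ :=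
  (0, ω, B (β - (3/4 : ℝ) • K) ω)

/-- The Bayer–Macrì vector `w_{ω,β}(ch)`. -/
def wBM (B : V →ₗ[ℝ] V →ₗ[ℝ] ℝ) (K : V) (χ : ℝ) (ω β : V) (ch : ℝ × V × ℝ) :
    ℝ × V × ℝ :=
  ZIm B ω β ch • mhoRe B K χ ω β - ZRe B ω β ch • mhoIm B K ω β

/-!
`℧_Z` is the vector representing the central charge under the Mukai pairing:
`⟨℧_Z^re, v(ch)⟩ = Re Z(ch)` and `⟨℧_Z^im, v(ch)⟩ = Im Z(ch)`. As the pairing is linear in its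
first argument, `⟨w(ch), v(ch)⟩ = Im Z(ch) · Re Z(ch) - Re Z(ch) · Im Z(ch) = 0`.
-/

theorem mukaiPair_sub_left (B : V →ₗ[ℝ] V →ₗ[ℝ] ℝ) (K : V) (u w v : ℝ × V × ℝ) :
    mukaiPair B K (u - w) v = mukaiPair B K u v - mukaiPair B K w v := by
  simp only [mukaiPair, Prod.fst_sub, Prod.snd_sub, map_sub, LinearMap.sub_apply]
  ring

theorem mukaiPair_smul_left (B : V →ₗ[ℝ] V →ₗ[ℝ] ℝ) (K : V) (a : ℝ) (w v : ℝ × V × ℝ) :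
    mukaiPair B K (a • w) v = a * mukaiPair B K w v := by
  simp only [mukaiPair, Prod.smul_fst, Prod.smul_snd, smul_eq_mul, map_smul,
    LinearMap.smul_apply]
  ring

section Symmetric

variable (B : V →ₗ[ℝ] V →ₗ[ℝ] ℝ) {K : V} {χ : ℝ} {ω β : V}

theorem mukaiPair_mhoRe_mukaiVec (hB : ∀ v w : V, B v w = B w v) (ch : ℝ × V × ℝ) :
    mukaiPair B K (mhoRe B K χ ω β) (mukaiVec B K χ ch) = ZRe B ω β ch := by
  simp only [mukaiPair, mhoRe, mukaiVec, ZRe, map_sub, map_smul, LinearMap.sub_apply,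
    LinearMap.smul_apply, smul_eq_mul]
  rw [hB K β, hB K ch.2.1, hB β ch.2.1]
  ring

theorem mukaiPair_mhoIm_mukaiVec (hB : ∀ v w : V, B v w = B w v) (ch : ℝ × V × ℝ) :
    mukaiPair B K (mhoIm B K ω β) (mukaiVec B K χ ch) = ZIm B ω β ch := by
  simp only [mukaiPair, mhoIm, mukaiVec, ZIm, map_sub, map_smul, LinearMap.sub_apply,
    LinearMap.smul_apply, smul_eq_mul]
  rw [hB K ω, hB ω ch.2.1]
  ring

end Symmetric

/-- the Bayer–Macrì vector is Mukai-perpendicular to the Mukai vector. -/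
theorem wBM_mukai_perp
    (B : V →ₗ[ℝ] V →ₗ[ℝ] ℝ) (hB : ∀ v w : V, B v w = B w v)
    (K : V) (χ : ℝ) (ch : ℝ × V × ℝ) (ω β : V) :
    mukaiPair B K (wBM B K χ ω β ch) (mukaiVec B K χ ch) = 0 := by
  rw [wBM, mukaiPair_sub_left, mukaiPair_smul_left, mukaiPair_smul_left,
    mukaiPair_mhoRe_mukaiVec B hB, mukaiPair_mhoIm_mukaiVec B hB]
  ring
end
end

section
/- Bertram's nested wall theorem in the (s,t)-model (Theorem 2.6, main equivalence): fix a frame (H,γ,u) and Chern characters ch = (x, y₁H + y₂γ + δ, z), ch' = (r, c₁H + c₂γ + δ', χ') with xc₁ − ry₁ ≠ 0. Then for all real s and t > 0, the wall condition Re Z_{tH, sH+uγ}(ch')·Im Z_{tH, sH+uγ}(ch) = Re Z_{tH, sH+uγ}(ch)·Im Z_{tH, sH+uγ}(ch') holds if and only if (s − C)² + t² = D + C², where C := (xχ' − rz + ud(xc₂ − ry₂))/(g(xc₁ − ry₁)) and D := (2zc₁ − 2c₂udy₁ − xu²dc₁ + 2y₂udc₁ − 2χ'y₁ + ru²dy₁)/(g(xc₁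 − ry₁)). -/
noncomputable section

variable {V : Type*} [AddCommGroup V] [Module ℝ V]

/-! In the frame, `Im Z(ch) = t g (y₁ - x s)` and `Re Z(ch)` is quadratic in `(s, t)`. In the cross
difference `Re Z(ch') Im Z(ch) - Re Z(ch) Im Z(ch')` the cubic terms in `s` cancel, leaving
`-(t g / 2) (N (s² + t²) - 2 s P - Q)` with `N = g (x c₁ - r y₁) ≠ 0`; since `t g ≠ 0`, completing the
square turns the wall equation into the circle with centre `(C, 0)`. -/

section Frame

variable (B : V →ₗ[ℝ] V →ₗ[ℝ] ℝ) {H γ δ : V} {u s t x y₁ y₂ z : ℝ}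

theorem ZRe_frame (hHγ : B H γ = 0) (hγH : B γ H = 0) (hδH : B δ H = 0) (hδγ : B δ γ = 0) :
    ZRe B (t • H) (s • H + u • γ) (x, y₁ • H + y₂ • γ + δ, z) =
      -z + s * y₁ * B H H + u * y₂ * B γ γ
        - x / 2 * ((s ^ 2 - t ^ 2) * B H H + u ^ 2 * B γ γ) := by
  simp only [ZRe, map_add, map_smul, LinearMap.add_apply, LinearMap.smul_apply, smul_eq_mul,
    hHγ, hγH, hδH, hδγ]
  ring

theorem ZIm_frame (hγH : B γ H = 0) (hδH : B δ H = 0) :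
    ZIm B (t • H) (s • H + u • γ) (x, y₁ • H + y₂ • γ + δ, z) = t * B H H * (y₁ - x * s) := by
  simp only [ZIm, map_add, map_smul, LinearMap.add_apply, LinearMap.smul_apply, smul_eq_mul,
    hγH, hδH]
  ring

end Frame

theorem quadratic_eq_zero_iff_circle {N P Q s t : ℝ} (hN : N ≠ 0) :
    N * (s ^ 2 + t ^ 2) - 2 * s * P - Q = 0 ↔ (s - P / N) ^ 2 + t ^ 2 = Q / N + (P / N) ^ 2 := by
  rw [← mul_right_inj' hN]
  constructor <;> intro h
  · field_simp
    linear_combination h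
  · field_simp at h
    linear_combination h

theorem nested_wall_st_model_general
    (B : V →ₗ[ℝ] V →ₗ[ℝ] ℝ) (hB : ∀ v w : V, B v w = B w v)
    (H γ : V) (u g d : ℝ)
    (hg : g = B H H) (hgpos : 0 < g) (hHγ : B H γ = 0)
    (hd : d = -(B γ γ))
    (x y₁ y₂ z r c₁ c₂ χ' : ℝ) (δ δ' : V)
    (hδH : B δ H = 0) (hδγ : B δ γ = 0) (hδ'H : B δ' H = 0) (hδ'γ : B δ' γ = 0)
    (hden : x * c₁ - r * y₁ ≠ 0)
    (C D : ℝ)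
    (hC : C = (x * χ' - r * z + u * d * (x * c₂ - r * y₂)) / (g * (x * c₁ - r * y₁)))
    (hD : D = (2*z*c₁ - 2*c₂*u*d*y₁ - x*u^2*d*c₁ + 2*y₂*u*d*c₁ - 2*χ'*y₁ + r*u^2*d*y₁)
              / (g * (x * c₁ - r * y₁))) :
    ∀ s t : ℝ, 0 < t →
      ((ZRe B (t • H) (s • H + u • γ) (r, c₁ • H + c₂ • γ + δ', χ') *
          ZIm B (t • H) (s • H + u • γ) (x, y₁ • H + y₂ • γ + δ, z) =
        ZRe B (t • H) (s • H + u • γ) (x, y₁ • H + y₂ • γ + δ, z) *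
          ZIm B (t • H) (s • H + u • γ) (r, c₁ • H + c₂ • γ + δ', χ')) ↔
        (s - C)^2 + t^2 = D + C^2) := by
  intro s t ht
  have hγH : B γ H = 0 := (hB γ H).trans hHγ
  have hγγ : B γ γ = -d := by rw [hd, neg_neg]
  have cross_difference :
      ZRe B (t • H) (s • H + u • γ) (r, c₁ • H + c₂ • γ + δ', χ') *
          ZIm B (t • H) (s • H + u • γ) (x, y₁ • H + y₂ • γ + δ, z) -
        ZRe B (t • H) (s • H + u • γ) (x, y₁ • H + y₂ • γ + δ, z) *
          ZIm B (t • H) (s • H + u • γ) (r, c₁ • H + c₂ • γ + δ', χ') =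
      -(t * g / 2) * (g * (x * c₁ - r * y₁) * (s ^ 2 + t ^ 2)
        - 2 * s * (x * χ' - r * z + u * d * (x * c₂ - r * y₂))
        - (2*z*c₁ - 2*c₂*u*d*y₁ - x*u^2*d*c₁ + 2*y₂*u*d*c₁ - 2*χ'*y₁ + r*u^2*d*y₁)) := by
    rw [ZRe_frame B hHγ hγH hδ'H hδ'γ, ZRe_frame B hHγ hγH hδH hδγ, ZIm_frame B hγH hδ'H,
      ZIm_frame B hγH hδH, hγγ, ← hg]
    ring
  have htg : -(t * g / 2) ≠ 0 := neg_ne_zero.mpr (by positivity)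
  rw [← sub_eq_zero, cross_difference, mul_eq_zero, or_iff_right htg, hC, hD,
    quadratic_eq_zero_iff_circle (mul_ne_zero hgpos.ne' hden)]

/-- Bertram's nested wall theorem in the `(s,t)`-model (Theorem 2.6). -/
theorem nested_wall_st_model
    (B : V →ₗ[ℝ] V →ₗ[ℝ] ℝ) (hB : ∀ v w : V, B v w = B w v)
    (H γ : V) (u g d : ℝ)
    (hg : g = B H H) (hgpos : 0 < g) (hHγ : B H γ = 0)
    (hd : d = -(B γ γ)) (hdnn : 0 ≤ d) (hu : 0 ≤ u)
    (x y₁ y₂ z r c₁ c₂ χ' : ℝ) (δ δ' : V)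
    (hδH : B δ H = 0) (hδγ : B δ γ = 0) (hδ'H : B δ' H = 0) (hδ'γ : B δ' γ = 0)
    (hden : x * c₁ - r * y₁ ≠ 0)
    (C D : ℝ)
    (hC : C = (x * χ' - r * z + u * d * (x * c₂ - r * y₂)) / (g * (x * c₁ - r * y₁)))
    (hD : D = (2*z*c₁ - 2*c₂*u*d*y₁ - x*u^2*d*c₁ + 2*y₂*u*d*c₁ - 2*χ'*y₁ + r*u^2*d*y₁)
              / (g * (x * c₁ - r * y₁))) :
    ∀ s t : ℝ, 0 < t →
      ((ZRe B (t • H) (s • H + u • γ) (r, c₁ • H + c₂ • γ + δ', χ') *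
          ZIm B (t • H) (s • H + u • γ) (x, y₁ • H + y₂ • γ + δ, z) =
        ZRe B (t • H) (s • H + u • γ) (x, y₁ • H + y₂ • γ + δ, z) *
          ZIm B (t • H) (s • H + u • γ) (r, c₁ • H + c₂ • γ + δ', χ')) ↔
        (s - C)^2 + t^2 = D + C^2) :=
  nested_wall_st_model_general B hB H γ u g d hg hgpos hHγ hd x y₁ y₂ z r c₁ c₂ χ' δ δ' hδH hδγ hδ'H
    hδ'γ hden C D hC hD
end
end

section
/- Theorem 2.6, case ch₀ ≠ 0: in a frame (H,γ,u) with ch = (x, y₁H + y₂γ + δ, z), ch' = (r, c₁H + c₂γ + δ', χ'), x ≠ 0 and xc₁ − ry₁ ≠ 0, the quantities C and D satisfy D = −(2y₁/x)·C + (ud(2y₂ − ux) + 2z)/(gx) = −(2y₁/x)·C + (y₁²/x² − F), where F := (d/g)(u − y₂/x)² + (1/(x²g))(y₁²g − y₂²d − 2xz). Moreover, if B(δ,δ) ≤ 0 (Hodge index) and ch is of Bogomolov type, i.e. B(ch₁,ch₁) − 2xz ≥ 0 where ch₁ = y₁H + y₂γ + δ, then F ≥ 0 (for every u ≥ 0).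 -/
noncomputable section

variable {V : Type*} [AddCommGroup V] [Module ℝ V]

/-! The two formulas for `D` are identities of rational functions once the denominators `g`,
`x` and `x c₁ - r y₁` are nonzero. For `F ≥ 0`: `H`, `γ`, `δ` are pairwise orthogonal, so
`B(ch₁, ch₁) = y₁² g - y₂² d + B(δ, δ)`; with `B(δ, δ) ≤ 0` the Bogomolov inequality gives
`y₁² g - y₂² d - 2 x z ≥ 0`, and both summands of `F` are then nonnegative as `g > 0`, `d ≥ 0`. -/

theorem bilin_apply_self_of_orthogonal {R M : Type*} [CommRing R] [AddCommGroup M] [Module R M]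
    (B : M →ₗ[R] M →ₗ[R] R) (hB : ∀ v w : M, B v w = B w v) {H γ δ : M}
    (hHγ : B H γ = 0) (hδH : B δ H = 0) (hδγ : B δ γ = 0) (a b : R) :
    B (a • H + b • γ + δ) (a • H + b • γ + δ) = a ^ 2 * B H H + b ^ 2 * B γ γ + B δ δ := by
  simp only [map_add, map_smul, LinearMap.add_apply, LinearMap.smul_apply, smul_eq_mul]
  rw [hB γ H, hB H δ, hB γ δ, hHγ, hδH, hδγ]
  ring

theorem wall_slope_eq {g x y₁ y₂ z r c₁ c₂ χ' u d : ℝ} (hg : g ≠ 0) (hx : x ≠ 0)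
    (hden : x * c₁ - r * y₁ ≠ 0) :
    (2*z*c₁ - 2*c₂*u*d*y₁ - x*u^2*d*c₁ + 2*y₂*u*d*c₁ - 2*χ'*y₁ + r*u^2*d*y₁)
        / (g * (x * c₁ - r * y₁)) =
      -(2*y₁/x) * ((x * χ' - r * z + u * d * (x * c₂ - r * y₂)) / (g * (x * c₁ - r * y₁)))
        + (u*d*(2*y₂ - u*x) + 2*z) / (g*x) := by
  generalize he : x * c₁ - r * y₁ = e at hden ⊢
  field_simp
  rw [← he]
  ring

theorem wall_intercept_eq {g x y₁ y₂ z u d : ℝ} (hg : g ≠ 0) (hx : x ≠ 0) :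
    (u*d*(2*y₂ - u*x) + 2*z) / (g*x) =
      y₁^2/x^2 - ((d/g) * (u - y₂/x)^2 + (1/(x^2*g)) * (y₁^2*g - y₂^2*d - 2*x*z)) := by
  field_simp
  ring

theorem wall_discriminant_nonneg {g x y₁ y₂ z u d : ℝ} (hg : 0 < g) (hd : 0 ≤ d)
    (hbog : 0 ≤ y₁^2*g - y₂^2*d - 2*x*z) :
    0 ≤ (d/g) * (u - y₂/x)^2 + (1/(x^2*g)) * (y₁^2*g - y₂^2*d - 2*x*z) := by
  positivity

theorem nested_wall_rank_nonzero_general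
    (B : V →ₗ[ℝ] V →ₗ[ℝ] ℝ) (hB : ∀ v w : V, B v w = B w v)
    (H γ : V) (u g d : ℝ)
    (hg : g = B H H) (hgpos : 0 < g) (hHγ : B H γ = 0)
    (hd : d = -(B γ γ)) (hdnn : 0 ≤ d)
    (x y₁ y₂ z r c₁ c₂ χ' : ℝ) (δ : V)
    (hδH : B δ H = 0) (hδγ : B δ γ = 0)
    (hx : x ≠ 0) (hden : x * c₁ - r * y₁ ≠ 0)
    (C D F : ℝ)
    (hC : C = (x * χ' - r * z + u * d * (x * c₂ - r * y₂)) / (g * (x * c₁ - r * y₁)))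
    (hD : D = (2*z*c₁ - 2*c₂*u*d*y₁ - x*u^2*d*c₁ + 2*y₂*u*d*c₁ - 2*χ'*y₁ + r*u^2*d*y₁)
              / (g * (x * c₁ - r * y₁)))
    (hF : F = (d/g) * (u - y₂/x)^2 + (1/(x^2*g)) * (y₁^2*g - y₂^2*d - 2*x*z)) :
    D = -(2*y₁/x) * C + (u*d*(2*y₂ - u*x) + 2*z) / (g*x) ∧
    D = -(2*y₁/x) * C + (y₁^2/x^2 - F) ∧
    (B δ δ ≤ 0 →
      0 ≤ B (y₁ • H + y₂ • γ + δ) (y₁ • H + y₂ • γ + δ) - 2*x*z →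
      0 ≤ F) := by
  have hslope : D = -(2*y₁/x) * C + (u*d*(2*y₂ - u*x) + 2*z) / (g*x) := by
    rw [hC, hD]
    exact wall_slope_eq hgpos.ne' hx hden
  refine ⟨hslope, ?_, fun hδδ hbog => ?_⟩
  · rw [hslope, hF, wall_intercept_eq hgpos.ne' hx]
  · rw [bilin_apply_self_of_orthogonal B hB hHγ hδH hδγ, ← hg] at hbog
    rw [hF]
    exact wall_discriminant_nonneg hgpos hdnn (by rw [hd]; linarith)

/-- Theorem 2.6, case `ch₀ ≠ 0`. -/
theorem nested_wall_rank_nonzero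
    (B : V →ₗ[ℝ] V →ₗ[ℝ] ℝ) (hB : ∀ v w : V, B v w = B w v)
    (H γ : V) (u g d : ℝ)
    (hg : g = B H H) (hgpos : 0 < g) (hHγ : B H γ = 0)
    (hd : d = -(B γ γ)) (hdnn : 0 ≤ d) (hu : 0 ≤ u)
    (x y₁ y₂ z r c₁ c₂ χ' : ℝ) (δ δ' : V)
    (hδH : B δ H = 0) (hδγ : B δ γ = 0) (hδ'H : B δ' H = 0) (hδ'γ : B δ' γ = 0)
    (hx : x ≠ 0) (hden : x * c₁ - r * y₁ ≠ 0)
    (C D F : ℝ)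
    (hC : C = (x * χ' - r * z + u * d * (x * c₂ - r * y₂)) / (g * (x * c₁ - r * y₁)))
    (hD : D = (2*z*c₁ - 2*c₂*u*d*y₁ - x*u^2*d*c₁ + 2*y₂*u*d*c₁ - 2*χ'*y₁ + r*u^2*d*y₁)
              / (g * (x * c₁ - r * y₁)))
    (hF : F = (d/g) * (u - y₂/x)^2 + (1/(x^2*g)) * (y₁^2*g - y₂^2*d - 2*x*z)) :
    D = -(2*y₁/x) * C + (u*d*(2*y₂ - u*x) + 2*z) / (g*x) ∧
    D = -(2*y₁/x) * C + (y₁^2/x^2 - F) ∧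
    (B δ δ ≤ 0 →
      0 ≤ B (y₁ • H + y₂ • γ + δ) (y₁ • H + y₂ • γ + δ) - 2*x*z →
      0 ≤ F) :=
  nested_wall_rank_nonzero_general B hB H γ u g d hg hgpos hHγ hd hdnn x y₁ y₂ z r c₁ c₂ χ' δ hδH
    hδγ hx hden C D F hC hD hF
end
end

section
/- Theorem 2.6, case ch₀ = 0: in a frame (H,γ,u) with ch = (0, y₁H + y₂γ + δ, z), y₁ > 0, and ch' = (r, c₁H + c₂γ + δ', χ') with r ≠ 0, the center C = (z + duy₂)/(gy₁) is independent of ch', and D satisfies D = −(2c₁/r)·C + (ud(2c₂ − ur) + 2χ')/(gr) = −(2c₁/r)·C + (c₁²/r² − F'), where F' := (d/g)(u − c₂/r)² + (1/(r²g))(c₁²g − c₂²d − 2rχ'). Moreover, if B(δ',δ') ≤ 0 (Hodge index) and ch' is of Bogomolov type, i.e. B(ch'₁,ch'₁) − 2rχ' ≥ 0 where ch'₁ = c₁H + c₂γ + δ', then F' ≥ 0 (for every u ≥ 0). -/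
noncomputable section

variable {V : Type*} [AddCommGroup V] [Module ℝ V]

/-!
The identities for `D` only clear denominators; the second form comes from completing the
square in `u`, which splits `F'` into `(d/g)(u - c₂/r)²` plus `1/(r²g)` times the Bogomolov
discriminant of `ch'` with the `δ'`-part removed. Since `H`, `γ`, `δ'` are orthogonal,
`B(ch'₁, ch'₁) = c₁²g - c₂²d + B(δ', δ')`, so by the Hodge index inequality `B(δ', δ') ≤ 0`
that discriminant dominates `B(ch'₁, ch'₁) - 2rχ' ≥ 0`.
-/

theorem apply_self_smul_add_smul_add_of_orthogonal {B : V →ₗ[ℝ] V →ₗ[ℝ] ℝ}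
    (hB : ∀ v w : V, B v w = B w v) {H γ δ : V}
    (hHγ : B H γ = 0) (hδH : B δ H = 0) (hδγ : B δ γ = 0) (a b : ℝ) :
    B (a • H + b • γ + δ) (a • H + b • γ + δ) = a ^ 2 * B H H + b ^ 2 * B γ γ + B δ δ := by
  simp only [map_add, map_smul, LinearMap.add_apply, LinearMap.smul_apply, smul_eq_mul]
  rw [hB H δ, hB γ δ, hB γ H, hδH, hδγ, hHγ]
  ring

theorem wall_D_eq_center {g r y₁ : ℝ} (hg : g ≠ 0) (hr : r ≠ 0) (hy₁ : y₁ ≠ 0)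
    (u d y₂ z c₁ c₂ χ' : ℝ) :
    (2*z*c₁ - 2*c₂*u*d*y₁ + 2*y₂*u*d*c₁ - 2*χ'*y₁ + r*u^2*d*y₁) / (g * (-(r * y₁)))
      = -(2*c₁/r) * ((z + d*u*y₂) / (g*y₁)) + (u*d*(2*c₂ - u*r) + 2*χ') / (g*r) := by
  field_simp
  ring

theorem wall_constant_eq_sub_discr {g r : ℝ} (hg : g ≠ 0) (hr : r ≠ 0) (u d c₁ c₂ χ' : ℝ) :
    (u*d*(2*c₂ - u*r) + 2*χ') / (g*r)
      = c₁^2/r^2 - ((d/g) * (u - c₂/r)^2 + (1/(r^2*g)) * (c₁^2*g - c₂^2*d - 2*r*χ')) := by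
  field_simp
  ring

theorem wall_discr_nonneg {g d : ℝ} (hd : 0 ≤ d) (hg : 0 < g) {u r c₁ c₂ χ' : ℝ}
    (hBog : 0 ≤ c₁^2*g - c₂^2*d - 2*r*χ') :
    0 ≤ (d/g) * (u - c₂/r)^2 + (1/(r^2*g)) * (c₁^2*g - c₂^2*d - 2*r*χ') := by
  have hsquare : 0 ≤ (d/g) * (u - c₂/r)^2 := by positivity
  have hdiscr : 0 ≤ (1/(r^2*g)) * (c₁^2*g - c₂^2*d - 2*r*χ') := mul_nonneg (by positivity) hBog
  exact add_nonneg hsquare hdiscr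

theorem nested_wall_rank_zero_general
    (B : V →ₗ[ℝ] V →ₗ[ℝ] ℝ) (hB : ∀ v w : V, B v w = B w v)
    (H γ : V) (u g d : ℝ)
    (hg : g = B H H) (hgpos : 0 < g) (hHγ : B H γ = 0)
    (hd : d = -(B γ γ)) (hdnn : 0 ≤ d)
    (y₁ y₂ z r c₁ c₂ χ' : ℝ) (δ' : V)
    (hδ'H : B δ' H = 0) (hδ'γ : B δ' γ = 0)
    (hy₁ : 0 < y₁) (hr : r ≠ 0)
    (C D F' : ℝ)
    (hC : C = (z + d*u*y₂) / (g*y₁))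
    (hD : D = (2*z*c₁ - 2*c₂*u*d*y₁ + 2*y₂*u*d*c₁ - 2*χ'*y₁ + r*u^2*d*y₁)
              / (g * (-(r * y₁))))
    (hF' : F' = (d/g) * (u - c₂/r)^2 + (1/(r^2*g)) * (c₁^2*g - c₂^2*d - 2*r*χ')) :
    D = -(2*c₁/r) * C + (u*d*(2*c₂ - u*r) + 2*χ') / (g*r) ∧
    D = -(2*c₁/r) * C + (c₁^2/r^2 - F') ∧
    (B δ' δ' ≤ 0 →
      0 ≤ B (c₁ • H + c₂ • γ + δ') (c₁ • H + c₂ • γ + δ') - 2*r*χ' →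
      0 ≤ F') := by
  refine ⟨?_, ?_, fun hHodge hBog => ?_⟩
  · rw [hD, hC, wall_D_eq_center hgpos.ne' hr hy₁.ne']
  · rw [hD, hC, hF', wall_D_eq_center hgpos.ne' hr hy₁.ne',
      wall_constant_eq_sub_discr hgpos.ne' hr]
  · rw [hF']
    refine wall_discr_nonneg hdnn hgpos ?_
    rw [apply_self_smul_add_smul_add_of_orthogonal hB hHγ hδ'H hδ'γ] at hBog
    subst hg hd
    linarith

/-- Theorem 2.6, case `ch₀ = 0`. -/
theorem nested_wall_rank_zero
    (B : V →ₗ[ℝ] V →ₗ[ℝ] ℝ) (hB : ∀ v w : V, B v w = B w v)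
    (H γ : V) (u g d : ℝ)
    (hg : g = B H H) (hgpos : 0 < g) (hHγ : B H γ = 0)
    (hd : d = -(B γ γ)) (hdnn : 0 ≤ d) (hu : 0 ≤ u)
    (y₁ y₂ z r c₁ c₂ χ' : ℝ) (δ δ' : V)
    (hδH : B δ H = 0) (hδγ : B δ γ = 0) (hδ'H : B δ' H = 0) (hδ'γ : B δ' γ = 0)
    (hy₁ : 0 < y₁) (hr : r ≠ 0)
    (C D F' : ℝ)
    (hC : C = (z + d*u*y₂) / (g*y₁))
    (hD : D = (2*z*c₁ - 2*c₂*u*d*y₁ + 2*y₂*u*d*c₁ - 2*χ'*y₁ + r*u^2*d*y₁)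
              / (g * (-(r * y₁))))
    (hF' : F' = (d/g) * (u - c₂/r)^2 + (1/(r^2*g)) * (c₁^2*g - c₂^2*d - 2*r*χ')) :
    D = -(2*c₁/r) * C + (u*d*(2*c₂ - u*r) + 2*χ') / (g*r) ∧
    D = -(2*c₁/r) * C + (c₁^2/r^2 - F') ∧
    (B δ' δ' ≤ 0 →
      0 ≤ B (c₁ • H + c₂ • γ + δ') (c₁ • H + c₂ • γ + δ') - 2*r*χ' →
      0 ≤ F') :=
  nested_wall_rank_zero_general B hB H γ u g d hg hgpos hHγ hd hdnn y₁ y₂ z r c₁ c₂ χ' δ' hδ'H hδ'γ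
    hy₁ hr C D F' hC hD hF'
end
end

section
/- Perpendicularity of the vectors m, w, u (Lemma 4.8): let ch = (ch₀, ch₁, ch₂) with ch₀ ≠ 0, and define, for L ∈ V, m(L, ch) := (0, L, B(ch₁/ch₀ − (3/4)K, L)); w(ch) := (1, −(3/4)K, −ch₂/ch₀ − (1/2)χ + (11/32)B(K,K)); and u(ch) := w(ch) + m((1/2)K, ch) = (1, −(1/4)K, −ch₂/ch₀ + B(ch₁,K)/(2ch₀) − (1/2)χ − (1/32)B(K,K)). Then for every L ∈ V, the three vectors m(L, ch), w(ch) and u(ch) are all Mukai-perpendicular to v(ch): ⟨m(L,ch), v(ch)⟩ = ⟨w(ch), v(ch)⟩ = ⟨u(ch), v(ch)⟩ = 0. -/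
noncomputable section

variable {V : Type*} [AddCommGroup V] [Module ℝ V]

/-- The vector `m(L, ch)` for `ch₀ ≠ 0`. -/
def mVec (B : V →ₗ[ℝ] V →ₗ[ℝ] ℝ) (K : V) (ch : ℝ × V × ℝ) (L : V) : ℝ × V × ℝ :=
  (0, L, B (ch.1⁻¹ • ch.2.1 - (3/4 : ℝ) • K) L)

/-- The vector `w(ch)` for `ch₀ ≠ 0`. -/
def wVec (B : V →ₗ[ℝ] V →ₗ[ℝ] ℝ) (K : V) (χ : ℝ) (ch : ℝ × V × ℝ) : ℝ × V × ℝ :=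
  (1, -(3/4 : ℝ) • K, -(ch.2.2 / ch.1) - (1/2) * χ + (11/32) * B K K)

/-- The vector `u(ch) = w(ch) + m((1/2)K, ch)` for `ch₀ ≠ 0`. -/
def uVec (B : V →ₗ[ℝ] V →ₗ[ℝ] ℝ) (K : V) (χ : ℝ) (ch : ℝ × V × ℝ) : ℝ × V × ℝ :=
  wVec B K χ ch + mVec B K ch ((1/2 : ℝ) • K)

theorem mukaiPair_add_left (B : V →ₗ[ℝ] V →ₗ[ℝ] ℝ) (K : V) (w w' v : ℝ × V × ℝ) :
    mukaiPair B K (w + w') v = mukaiPair B K w v + mukaiPair B K w' v := by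
  simp only [mukaiPair, Prod.fst_add, Prod.snd_add, map_add, LinearMap.add_apply]
  ring

section Perpendicularity

variable (B : V →ₗ[ℝ] V →ₗ[ℝ] ℝ) (hB : ∀ v w : V, B v w = B w v)
  (K : V) (χ : ℝ) (ch : ℝ × V × ℝ) (hch₀ : ch.1 ≠ 0)
include hB hch₀

-- The `K`-terms cancel since `1/4 + 1/2 = 3/4`: the first comes from `v₁`, the second from
-- the pairing, the third from the `K`-shift in `m`.
theorem mukaiPair_mVec_mukaiVec (L : V) :
    mukaiPair B K (mVec B K ch L) (mukaiVec B K χ ch) = 0 := by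
  simp only [mukaiPair, mVec, mukaiVec, map_sub, map_smul, LinearMap.sub_apply,
    LinearMap.smul_apply, smul_eq_mul]
  rw [hB ch.2.1 L, hB K L]
  field_simp
  ring

theorem mukaiPair_wVec_mukaiVec :
    mukaiPair B K (wVec B K χ ch) (mukaiVec B K χ ch) = 0 := by
  simp only [mukaiPair, wVec, mukaiVec, map_sub, map_smul, LinearMap.sub_apply,
    LinearMap.smul_apply, smul_eq_mul]
  rw [hB ch.2.1 K]
  field_simp
  ring

theorem uVec_eq :
    uVec B K χ ch
      = ((1 : ℝ), -(1/4 : ℝ) • K,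
          -(ch.2.2 / ch.1) + B ch.2.1 K / (2 * ch.1) - (1/2) * χ - (1/32) * B K K) := by
  simp only [uVec, wVec, mVec, Prod.mk_add_mk, Prod.ext_iff, map_sub, map_smul,
    LinearMap.sub_apply, LinearMap.smul_apply, smul_eq_mul]
  refine ⟨by ring, by module, ?_⟩
  rw [hB ch.2.1 K]
  field_simp
  ring

end Perpendicularity

/-- perpendicularity of the vectors `m`, `w`, `u` (Lemma 4.8). -/
theorem m_w_u_perpendicularity
    (B : V →ₗ[ℝ] V →ₗ[ℝ] ℝ) (hB : ∀ v w : V, B v w = B w v)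
    (K : V) (χ : ℝ) (ch : ℝ × V × ℝ) (hch₀ : ch.1 ≠ 0) :
    uVec B K χ ch
      = ((1 : ℝ), -(1/4 : ℝ) • K,
          -(ch.2.2 / ch.1) + B ch.2.1 K / (2 * ch.1) - (1/2) * χ - (1/32) * B K K) ∧
    (∀ L : V, mukaiPair B K (mVec B K ch L) (mukaiVec B K χ ch) = 0) ∧
    mukaiPair B K (wVec B K χ ch) (mukaiVec B K χ ch) = 0 ∧
    mukaiPair B K (uVec B K χ ch) (mukaiVec B K χ ch) = 0 := by
  have hm := mukaiPair_mVec_mukaiVec B hB K χ ch hch₀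
  have hw := mukaiPair_wVec_mukaiVec B hB K χ ch hch₀
  refine ⟨uVec_eq B hB K χ ch hch₀, hm, hw, ?_⟩
  rw [uVec, mukaiPair_add_left, hw, hm, add_zero]
end
end

section
/- Self-pairings of the vectors ℧_Z and ℧_Ẑ (Appendix B): with the ℂ-bilinear extension of the Mukai pairing, ⟨℧_Z, ℧_Z⟩ = χ − (1/4)B(K,K) and ⟨℧_Ẑ, ℧_Ẑ⟩ = −(1/8)B(K,K); explicitly, writing ℧ = R + i·I, one has ⟨R,R⟩ − ⟨I,I⟩ equal to the stated real number and ⟨R,I⟩ + ⟨I,R⟩ = 0, where for ℧_Z: R = (1, β − (3/4)K, −(1/2)B(ω,ω) + (1/2)B(β − (3/4)K, β − (3/4)K) − (1/2)(χ − (1/8)B(K,K))), I = (0, ω, B(β − (3/4)K, ω)); and for ℧_Ẑ: R = (1, β − (1/2)K, (1/2)(B(β − (1/2)K, β − (1/2)K) − B(ω,ω))), I = (0, ω, B(β − (1/2)K, ω)). -/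
/-!
Both vectors are the real and imaginary parts of `e^{γ + iω} + c · pt`, with `γ = β - (3/4) K`,
`c = -(1/2)(χ - (1/8) B(K,K))` for `℧_Z` and `γ = β - (1/2) K`, `c = 0` for `℧_Ẑ`. For any such
vector the terms of the Mukai pairing that are linear in `K` cancel and the quadratic terms in
`γ` and `ω` cancel against the degree-two part, leaving `⟨R,R⟩ - ⟨I,I⟩ = -2c - (1/8) B(K,K)`;
the mixed pairing is `B(ω,γ) - B(γ,ω)`, which vanishes by symmetry of `B`.
-/

noncomputable section

variable {V : Type*} [AddCommGroup V] [Module ℝ V]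

/-- Real part of the vector `℧_Ẑ = e^{β - K/2 + iω}`. -/
def mhoHatRe (B : V →ₗ[ℝ] V →ₗ[ℝ] ℝ) (K : V) (ω β : V) : ℝ × V × ℝ :=
  (1, β - (1/2 : ℝ) • K,
    (1/2) * (B (β - (1/2 : ℝ) • K) (β - (1/2 : ℝ) • K) - B ω ω))

/-- Imaginary part of the vector `℧_Ẑ`. -/
def mhoHatIm (B : V →ₗ[ℝ] V →ₗ[ℝ] ℝ) (K : V) (ω β : V) : ℝ × V × ℝ :=
  (0, ω, B (β - (1/2 : ℝ) • K) ω)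

/-- Real part of `e^{γ + iω}` plus `c` in degree two. -/
def expRe (B : V →ₗ[ℝ] V →ₗ[ℝ] ℝ) (γ ω : V) (c : ℝ) : ℝ × V × ℝ :=
  (1, γ, (1/2) * (B γ γ - B ω ω) + c)

/-- Imaginary part of `e^{γ + iω}`. -/
def expIm (B : V →ₗ[ℝ] V →ₗ[ℝ] ℝ) (γ ω : V) : ℝ × V × ℝ :=
  (0, ω, B γ ω)

section ExpPairings

variable (B : V →ₗ[ℝ] V →ₗ[ℝ] ℝ) (K γ ω : V)

theorem mukaiPair_expRe_sub_mukaiPair_expIm (c : ℝ) :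
    mukaiPair B K (expRe B γ ω c) (expRe B γ ω c) - mukaiPair B K (expIm B γ ω) (expIm B γ ω)
      = -2 * c - (1/8) * B K K := by
  simp only [mukaiPair, expRe, expIm]
  ring

theorem mukaiPair_expRe_expIm_add_mukaiPair_expIm_expRe {B} (hB : B ω γ = B γ ω) (c : ℝ) :
    mukaiPair B K (expRe B γ ω c) (expIm B γ ω) + mukaiPair B K (expIm B γ ω) (expRe B γ ω c)
      = 0 := by
  simp only [mukaiPair, expRe, expIm]
  rw [hB]
  ring

end ExpPairings

theorem mhoRe_eq_expRe (B : V →ₗ[ℝ] V →ₗ[ℝ] ℝ) (K : V) (χ : ℝ) (ω β : V) :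
    mhoRe B K χ ω β = expRe B (β - (3/4 : ℝ) • K) ω (-(1/2) * (χ - (1/8) * B K K)) := by
  simp only [mhoRe, expRe, Prod.mk.injEq, true_and]
  ring

theorem mhoHatRe_eq_expRe (B : V →ₗ[ℝ] V →ₗ[ℝ] ℝ) (K ω β : V) :
    mhoHatRe B K ω β = expRe B (β - (1/2 : ℝ) • K) ω 0 := by
  rw [mhoHatRe, expRe, add_zero]

/-- self-pairings of the vectors `℧_Z` and `℧_Ẑ` (Appendix B). -/
theorem mho_self_pairings
    (B : V →ₗ[ℝ] V →ₗ[ℝ] ℝ) (hB : ∀ v w : V, B v w = B w v)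
    (K : V) (χ : ℝ) (ω β : V) :
    (mukaiPair B K (mhoRe B K χ ω β) (mhoRe B K χ ω β)
        - mukaiPair B K (mhoIm B K ω β) (mhoIm B K ω β)
      = χ - (1/4) * B K K) ∧
    (mukaiPair B K (mhoRe B K χ ω β) (mhoIm B K ω β)
        + mukaiPair B K (mhoIm B K ω β) (mhoRe B K χ ω β) = 0) ∧
    (mukaiPair B K (mhoHatRe B K ω β) (mhoHatRe B K ω β)
        - mukaiPair B K (mhoHatIm B K ω β) (mhoHatIm B K ω β)
      = -(1/8) * B K K) ∧
    (mukaiPair B K (mhoHatRe B K ω β) (mhoHatIm B K ω β)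
        + mukaiPair B K (mhoHatIm B K ω β) (mhoHatRe B K ω β) = 0) := by
  have hIm : mhoIm B K ω β = expIm B (β - (3/4 : ℝ) • K) ω := rfl
  have hHatIm : mhoHatIm B K ω β = expIm B (β - (1/2 : ℝ) • K) ω := rfl
  rw [mhoRe_eq_expRe, hIm, mhoHatRe_eq_expRe, hHatIm]
  refine ⟨?_, mukaiPair_expRe_expIm_add_mukaiPair_expIm_expRe _ _ _ (hB _ _) _,
    ?_, mukaiPair_expRe_expIm_add_mukaiPair_expIm_expRe _ _ _ (hB _ _) _⟩
  · rw [mukaiPair_expRe_sub_mukaiPair_expIm]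
    ring
  · rw [mukaiPair_expRe_sub_mukaiPair_expIm]
    ring
end
end
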